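/- arXiv:0911.5182 — 4 statements merged into one kernel-verified Lean document; each statement's English description precedes it below -/
import Mathlib

section
/- With ω as in the definition of the arithmetic polygon P_{{1,d},u} (slopes ω(0), ω(1), …), for every n with 1 ≤ n ≤ d, ∑_{k=0}^{n−1} ω(k) ≥ (p−1)·∑_{k=0}^{n−1}( (∑_{i=0}^{b−1}u_i)/(b d(p−1)) + k/d ), with equality when n = d. -/
open Finset

lemma sum_range_card_le' (s : Finset ℕ) : ∑ i ∈ Finset.range s.card, i ≤ ∑ x ∈ s, x := by
  induction s using Finset.strongInduction with
  | _ s ih =>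
    rcases s.eq_empty_or_nonempty with rfl | hs
    · simp
    · obtain ⟨m, hm, hmax⟩ := s.exists_max_image id hs
      have hsub : s ⊆ Finset.range (m + 1) := fun x hx =>
        Finset.mem_range.2 (Nat.lt_succ_of_le (hmax x hx))
      have hcard : s.card ≤ m + 1 := by simpa using Finset.card_le_card hsub
      have hpos : 1 ≤ s.card := Finset.card_pos.2 hs
      have key := ih (s.erase m) (Finset.erase_ssubset hm)
      rw [Finset.card_erase_of_mem hm] at key
      have h2 : ∑ x ∈ s, x = ∑ x ∈ s.erase m, x + m := by
        rw [Finset.sum_erase_add s _ hm]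
      have h3 : s.card = (s.card - 1) + 1 := by omega
      rw [h2, h3, Finset.sum_range_succ]
      exact Nat.add_le_add key (by omega)

lemma key_inj (p d n u : ℕ) (hp : p.Prime) (hpd : ¬ p ∣ d) (hnd : n ≤ d) :
    ∀ k1 ∈ Finset.range n, ∀ k2 ∈ Finset.range n,
      (p * k1 + u) % d = (p * k2 + u) % d → k1 = k2 := by
  intro k1 h1 k2 h2 he
  have hk1 : k1 < d := lt_of_lt_of_le (Finset.mem_range.1 h1) hnd
  have hk2 : k2 < d := lt_of_lt_of_le (Finset.mem_range.1 h2) hnd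
  have hun : IsUnit (p : ZMod d) := (ZMod.isUnit_prime_iff_not_dvd hp).2 hpd
  have hc : ((p * k1 + u : ℕ) : ZMod d) = ((p * k2 + u : ℕ) : ZMod d) := by
    rw [← ZMod.natCast_mod (p * k1 + u) d, ← ZMod.natCast_mod (p * k2 + u) d, he]
  push_cast at hc
  have hz : (k1 : ZMod d) = (k2 : ZMod d) := hun.mul_left_cancel (add_right_cancel hc)
  calc k1 = (k1 : ZMod d).val := (ZMod.val_cast_of_lt hk1).symm
    _ = (k2 : ZMod d).val := by rw [hz]
    _ = k2 := ZMod.val_cast_of_lt hk2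

lemma key_nat (p d n u : ℕ) (hp : p.Prime) (hpd : ¬ p ∣ d) (hnd : n ≤ d) :
    ∑ k ∈ Finset.range n, k ≤ ∑ k ∈ Finset.range n, (p * k + u) % d := by
  have hinj := key_inj p d n u hp hpd hnd
  have him : ∑ x ∈ (Finset.range n).image (fun k => (p * k + u) % d), x
      = ∑ k ∈ Finset.range n, (p * k + u) % d := Finset.sum_image hinj
  have hcard : ((Finset.range n).image (fun k => (p * k + u) % d)).card = n := by
    rw [Finset.card_image_of_injOn (fun a ha b hb => hinj a ha b hb), Finset.card_range]
  calc ∑ k ∈ Finset.range n, k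
      = ∑ i ∈ Finset.range ((Finset.range n).image (fun k => (p * k + u) % d)).card, i := by
        rw [hcard]
    _ ≤ ∑ x ∈ (Finset.range n).image (fun k => (p * k + u) % d), x := sum_range_card_le' _
    _ = _ := him

lemma key_eq (p d u : ℕ) (hp : p.Prime) (hpd : ¬ p ∣ d) (hd : 0 < d) :
    ∑ k ∈ Finset.range d, (p * k + u) % d = ∑ k ∈ Finset.range d, k := by
  have hinj := key_inj p d d u hp hpd le_rfl
  have him : (Finset.range d).image (fun k => (p * k + u) % d) = Finset.range d := by
    apply Finset.eq_of_subset_of_card_le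
    · intro x hx
      obtain ⟨k, _, rfl⟩ := Finset.mem_image.1 hx
      exact Finset.mem_range.2 (Nat.mod_lt _ hd)
    · rw [Finset.card_range, Finset.card_image_of_injOn (fun a ha b hb => hinj a ha b hb),
        Finset.card_range]
  calc ∑ k ∈ Finset.range d, (p * k + u) % d
      = ∑ x ∈ (Finset.range d).image (fun k => (p * k + u) % d), x :=
        (Finset.sum_image (g := fun k => (p * k + u) % d) (f := fun x => x) hinj).symm
    _ = ∑ k ∈ Finset.range d, k := by rw [him]

lemma fract_sum (p d u n : ℕ) (hd : 0 < d) (hnd : n ≤ d) :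
    ∑ k ∈ Finset.range n, (Int.fract (((p:ℚ) * k + u) / d) - Int.fract ((k:ℚ) / d))
      = (((∑ k ∈ Finset.range n, (p * k + u) % d : ℕ) : ℚ)
          - ((∑ k ∈ Finset.range n, k : ℕ) : ℚ)) / d := by
  have hd' : (0:ℚ) < d := by exact_mod_cast hd
  rw [sub_div, Finset.sum_sub_distrib]
  congr 1
  · rw [Nat.cast_sum, Finset.sum_div]
    refine Finset.sum_congr rfl fun k _ => ?_
    have h1 : ((p:ℚ) * k + u) / d = ((p * k + u : ℕ) : ℚ) / ((d:ℕ) : ℚ) := by push_cast; ring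
    rw [h1, Int.fract_div_natCast_eq_div_natCast_mod]
  · rw [Nat.cast_sum, Finset.sum_div]
    refine Finset.sum_congr rfl fun k hk => ?_
    have hkd : k < d := lt_of_lt_of_le (Finset.mem_range.1 hk) hnd
    rw [Int.fract_eq_self.2 ⟨by positivity, by
      rw [div_lt_one hd']; exact_mod_cast hkd⟩]

/-- Theorem 1.7: With ω the slope function of the arithmetic polygon
P_{{1,d},u} and h the slope function of the u-twisted Hodge polygon,
for every 1 ≤ n ≤ d we have ∑_{k<n} ω(k) ≥ (p−1)·∑_{k<n} h(k),
with equality when n = d. -/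
theorem stmt7 (p d b : ℕ) (hp : p.Prime) (hd : 2 ≤ d) (hb : 1 ≤ b) (hpd : ¬ p ∣ d)
    (u : Fin b → ℕ) (hu : ∀ i, u i ≤ p - 1)
    (ω h : ℕ → ℚ)
    (hω : ∀ n : ℕ, ω n = (((p : ℚ) - 1) * n + (∑ i, (u i : ℚ)) / b) / d
      + ((d : ℚ) - 1) * (1 / b) *
          ∑ i, (Int.fract (((p : ℚ) * n + u i) / d) - Int.fract ((n : ℚ) / d)))
    (hh : ∀ k : ℕ, h k = (∑ i, (u i : ℚ)) / (b * d * ((p : ℚ) - 1)) + (k : ℚ) / d) :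
    (∀ n : ℕ, 1 ≤ n → n ≤ d →
        ∑ k ∈ Finset.range n, ω k ≥ ((p : ℚ) - 1) * ∑ k ∈ Finset.range n, h k)
      ∧ ∑ k ∈ Finset.range d, ω k = ((p : ℚ) - 1) * ∑ k ∈ Finset.range d, h k := by
  have hd0 : 0 < d := by omega
  have hdq : (d:ℚ) ≠ 0 := by positivity
  have hbq : (b:ℚ) ≠ 0 := by positivity
  have hp2 : 2 ≤ p := hp.two_le
  have hpq : (p:ℚ) - 1 ≠ 0 := by
    have : (2:ℚ) ≤ p := by exact_mod_cast hp2
    linarith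
  -- termwise decomposition
  have hterm : ∀ k : ℕ, ω k - ((p:ℚ) - 1) * h k
      = ((d:ℚ) - 1) * (1 / b) *
          ∑ i, (Int.fract (((p : ℚ) * k + u i) / d) - Int.fract ((k : ℚ) / d)) := by
    intro k
    rw [hω, hh]
    field_simp
    ring
  have hsum : ∀ n : ℕ, ∑ k ∈ Finset.range n, ω k - ((p:ℚ) - 1) * ∑ k ∈ Finset.range n, h k
      = ((d:ℚ) - 1) * (1 / b) *
          ∑ i, ∑ k ∈ Finset.range n,
            (Int.fract (((p : ℚ) * k + u i) / d) - Int.fract ((k : ℚ) / d)) := by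
    intro n
    rw [Finset.mul_sum, ← Finset.sum_sub_distrib]
    rw [show ∑ i : Fin b, ∑ k ∈ Finset.range n,
        (Int.fract (((p : ℚ) * k + u i) / d) - Int.fract ((k : ℚ) / d))
      = ∑ k ∈ Finset.range n, ∑ i : Fin b,
        (Int.fract (((p : ℚ) * k + u i) / d) - Int.fract ((k : ℚ) / d)) from Finset.sum_comm]
    rw [Finset.mul_sum]
    exact Finset.sum_congr rfl fun k _ => hterm k
  have hinner : ∀ (i : Fin b) (n : ℕ), n ≤ d →
      0 ≤ ∑ k ∈ Finset.range n,
        (Int.fract (((p : ℚ) * k + u i) / d) - Int.fract ((k : ℚ) / d)) := by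
    intro i n hnd
    rw [fract_sum p d (u i) n hd0 hnd]
    have := key_nat p d n (u i) hp hpd hnd
    have h1 : ((∑ k ∈ Finset.range n, k : ℕ) : ℚ)
        ≤ ((∑ k ∈ Finset.range n, (p * k + u i) % d : ℕ) : ℚ) := by exact_mod_cast this
    have hd' : (0:ℚ) < d := by positivity
    exact div_nonneg (by linarith) (le_of_lt hd')
  have hinner_eq : ∀ i : Fin b,
      ∑ k ∈ Finset.range d,
        (Int.fract (((p : ℚ) * k + u i) / d) - Int.fract ((k : ℚ) / d)) = 0 := by
    intro i
    rw [fract_sum p d (u i) d hd0 le_rfl, key_eq p d (u i) hp hpd hd0, sub_self, zero_div]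
  have hbq' : (0:ℚ) < b := by
    have : (1:ℚ) ≤ b := by exact_mod_cast hb
    linarith
  have hdq2 : (2:ℚ) ≤ d := by exact_mod_cast hd
  constructor
  · intro n _ hnd
    have h0 : 0 ≤ ∑ k ∈ Finset.range n, ω k - ((p:ℚ) - 1) * ∑ k ∈ Finset.range n, h k := by
      rw [hsum n]
      have hs : 0 ≤ ∑ i : Fin b, ∑ k ∈ Finset.range n,
          (Int.fract (((p : ℚ) * k + u i) / d) - Int.fract ((k : ℚ) / d)) :=
        Finset.sum_nonneg fun i _ => hinner i n hnd
      have hnn : (0:ℚ) ≤ ((d:ℚ) - 1) * (1 / b) :=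
        mul_nonneg (by linarith) (by positivity)
      exact mul_nonneg hnn hs
    linarith
  · have h0 := hsum d
    rw [Finset.sum_congr rfl fun i _ => hinner_eq i] at h0
    simp only [Finset.sum_const, smul_zero, mul_zero] at h0
    linarith
end

section
/- Let K/ℚ_p be an unramified extension of degree a with Frobenius σ, V a K-vector space of finite dimension m, F a K-linear endomorphism of V. View V as a ℚ_p-vector space of dimension am and let σ act on V semilinearly (coordinatewise in a fixed K-basis). Then det_{ℚ_p}(σ^{−1} ∘ F) = ± Norm_{K/ℚ_p}(det_K F). -/
open Module

theorem LinearMap.det_eq_sign_of_apply_basis {R M ι : Type*} [CommRing R] [AddCommGroup M]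
    [Module R M] [Fintype ι] [DecidableEq ι] (b : Basis ι R M) (f : M →ₗ[R] M)
    (π : Equiv.Perm ι) (hf : ∀ i, f (b i) = b (π i)) :
    LinearMap.det f = Equiv.Perm.sign π := by
  have hfb : f ∘ b = b ∘ π := funext hf
  calc LinearMap.det f = LinearMap.det f * b.det b := by rw [b.det_self, mul_one]
    _ = b.det (b ∘ π) := by rw [← b.det_comp, hfb]
    _ = Equiv.Perm.sign π := by rw [b.det.map_perm, b.det_self, Units.smul_def, zsmul_one]

/-- In a normal basis `(τ x)_τ`, an element `σ` of the Galois group permutes the basis vectors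
by left multiplication, so its determinant is the sign of that permutation. -/
theorem AlgEquiv.det_toLinearMap_eq_sign {k K : Type*} [Field k] [Field K] [Algebra k K]
    [FiniteDimensional k K] [IsGalois k K] [DecidableEq (K ≃ₐ[k] K)] (σ : K ≃ₐ[k] K) :
    LinearMap.det σ.toLinearMap = Equiv.Perm.sign (Equiv.mulLeft σ) := by
  refine LinearMap.det_eq_sign_of_apply_basis (IsGalois.normalBasis k K) _ _ fun τ => ?_
  simp only [AlgEquiv.toLinearMap_apply, Equiv.coe_mulLeft, IsGalois.normalBasis_apply τ,
    IsGalois.normalBasis_apply (σ * τ), AlgEquiv.mul_apply]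

theorem stmt10_general (p : ℕ) [Fact p.Prime] (K : Type*) [Field K] [Algebra ℚ_[p] K]
    [FiniteDimensional ℚ_[p] K] [IsGalois ℚ_[p] K]
    (σ : K ≃ₐ[ℚ_[p]] K)
    (m : ℕ) (F : (Fin m → K) →ₗ[K] (Fin m → K))
    (g : (Fin m → K) →ₗ[ℚ_[p]] (Fin m → K))
    (hg : ∀ (v : Fin m → K) (i : Fin m), g v i = σ.symm (F v i)) :
    LinearMap.det g = Algebra.norm ℚ_[p] (LinearMap.det F) ∨
      LinearMap.det g = - Algebra.norm ℚ_[p] (LinearMap.det F) := by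
  classical
  have hg_comp : g = (LinearMap.pi fun i => σ.symm.toLinearMap ∘ₗ LinearMap.proj i) ∘ₗ
      F.restrictScalars ℚ_[p] := by
    ext v i
    simp [hg]
  have hdet : LinearMap.det g =
      LinearMap.det σ.symm.toLinearMap ^ m * Algebra.norm ℚ_[p] (LinearMap.det F) := by
    rw [hg_comp, LinearMap.det_comp, LinearMap.det_pi, LinearMap.det_restrictScalars,
      Finset.prod_const, Finset.card_fin]
  rw [hdet, AlgEquiv.det_toLinearMap_eq_sign, ← Int.cast_pow, ← Units.val_pow_eq_pow_val]
  rcases Int.units_eq_one_or (Equiv.Perm.sign (Equiv.mulLeft σ.symm) ^ m) with h | h <;> simp [h]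

/-- Lemma 3.5: Let K/ℚ_p be a finite Galois extension of degree a with
cyclic Galois group generated by the Frobenius σ (e.g. K unramified of degree a),
V = K^m, F a K-linear endomorphism of V, and g = σ⁻¹ ∘ F the ℚ_p-linear map acting
coordinatewise by σ⁻¹ after F. Then det_{ℚ_p}(g) = ± Norm_{K/ℚ_p}(det_K F). -/
theorem stmt10 (p : ℕ) [Fact p.Prime] (K : Type*) [Field K] [Algebra ℚ_[p] K]
    [FiniteDimensional ℚ_[p] K] [IsGalois ℚ_[p] K]
    (σ : K ≃ₐ[ℚ_[p]] K) (hσ : ∀ τ : K ≃ₐ[ℚ_[p]] K, ∃ i : ℕ, τ = σ ^ i)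
    (m : ℕ) (F : (Fin m → K) →ₗ[K] (Fin m → K))
    (g : (Fin m → K) →ₗ[ℚ_[p]] (Fin m → K))
    (hg : ∀ (v : Fin m → K) (i : Fin m), g v i = σ.symm (F v i)) :
    LinearMap.det g = Algebra.norm ℚ_[p] (LinearMap.det F) ∨
      LinearMap.det g = - Algebra.norm ℚ_[p] (LinearMap.det F) :=
  stmt10_general p K σ m F g hg
end

section
/- Let p be prime, d ≥ 2 with p ∤ d, u ∈ {0,…,p−1}, 1 ≤ n ≤ d−1, and τ a permutation of {0,…,n−1}. Then ∑_{l=0}^{n−1} ( ⌊(pl + u − τ(l))/d⌋ + d·{(pl + u − τ(l))/d} ) ≥ ∑_{l=0}^{n−1} ( (p−1)l + u )/d + (d−1)∑_{l=0}^{n−1}( {(pl+u)/d} − {l/d} ), with equality if and only if τ(l) ≤ d·{(pl+u)/d} for all l. -/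
/-!
For every `x`, `⌊x⌋ + d {x} = x + (d - 1) {x}`, and for `0 ≤ t < d` subtracting `t / d` lowers
`{x}` by `t / d`, plus a carry of `1` exactly when `t > d {x}`. Applied to `x = (p l + u) / d`,
`t = τ l`, and summed over `l`, the terms `l - τ l` cancel because `τ` is a permutation, so
`L - R` is `d - 1` times the number of carries: nonnegative, and zero iff there is no carry.
-/

open Finset

namespace Int

variable {R : Type*} [Ring R] [LinearOrder R] [IsStrictOrderedRing R] [FloorRing R]

theorem fract_sub_of_le_fract {a b : R} (hb : 0 ≤ b) (h : b ≤ fract a) :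
    fract (a - b) = fract a - b :=
  fract_eq_iff.2 ⟨sub_nonneg.2 h, (sub_le_self _ hb).trans_lt (fract_lt_one a), ⌊a⌋,
    by rw [fract]; abel⟩

theorem fract_sub_of_fract_lt {a b : R} (h : fract a < b) (hb : b < 1) :
    fract (a - b) = fract a - b + 1 :=
  fract_eq_iff.2 ⟨sub_add_comm (fract a) b 1 ▸ add_nonneg (sub_nonneg.2 hb.le) (fract_nonneg a),
    (add_lt_iff_neg_right 1).2 (sub_neg.2 h), ⌊a⌋ - 1, by push_cast; rw [fract]; abel⟩

end Int

section

variable {K : Type*} [Field K] [LinearOrder K] [IsStrictOrderedRing K] [FloorRing K]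

theorem floor_add_mul_fract_sub_div (x : K) {d t : K} (hd : 0 < d) (ht : 0 ≤ t) (htd : t < d) :
    ⌊x - t / d⌋ + d * Int.fract (x - t / d)
      = x - t / d + (d - 1) * (Int.fract x - t / d)
        + (d - 1) * if d * Int.fract x < t then 1 else 0 := by
  have hfract : Int.fract (x - t / d)
      = Int.fract x - t / d + if d * Int.fract x < t then 1 else 0 := by
    split_ifs with h
    · exact Int.fract_sub_of_fract_lt (by rwa [lt_div_iff₀' hd]) (by rwa [div_lt_one hd])
    · rw [add_zero]
      exact Int.fract_sub_of_le_fract (div_nonneg ht hd.le)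
        ((div_le_iff₀' hd).2 (not_lt.1 h))
  rw [← Int.self_sub_fract, hfract]
  ring

end

theorem floor_add_mul_fract_mul_add_sub_div (p u d l t : ℕ) (hl : l < d) (ht : t < d) :
    ((⌊((((p * l + u : ℕ) : ℤ) - (t : ℤ)) : ℚ) / d⌋ : ℚ)
        + (d : ℚ) * Int.fract (((((p * l + u : ℕ) : ℤ) - (t : ℤ)) : ℚ) / d))
      = (((p : ℚ) - 1) * l + u) / d
          + ((d : ℚ) - 1) * (Int.fract (((p : ℚ) * l + u) / d) - Int.fract ((l : ℚ) / d))
          + ((l : ℚ) - t)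
          + ((d : ℚ) - 1) *
              if (d : ℚ) * Int.fract (((p : ℚ) * l + u) / d) < t then 1 else 0 := by
  have hd : (0 : ℚ) < d := by exact_mod_cast (Nat.zero_le l).trans_lt hl
  have hfl : Int.fract ((l : ℚ) / d) = l / d :=
    Int.fract_eq_self.2 ⟨by positivity, (div_lt_one hd).2 (by exact_mod_cast hl)⟩
  have hcast :
      ((((p * l + u : ℕ) : ℤ) - (t : ℤ)) : ℚ) / d = ((p : ℚ) * l + u) / d - t / d := by
    push_cast; ring
  rw [hcast, floor_add_mul_fract_sub_div _ hd (Nat.cast_nonneg t) (by exact_mod_cast ht), hfl]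
  field_simp
  ring

theorem stmt13_general (p d u n : ℕ) (hd : 2 ≤ d)
    (hnd : n ≤ d - 1) (τ : Equiv.Perm (Fin n))
    (L R : ℚ)
    (hL : L = ∑ l : Fin n,
      ((⌊((((p * (l : ℕ) + u : ℕ) : ℤ) - ((τ l : ℕ) : ℤ)) : ℚ) / d⌋ : ℚ)
        + (d : ℚ) * Int.fract (((((p * (l : ℕ) + u : ℕ) : ℤ) - ((τ l : ℕ) : ℤ)) : ℚ) / d)))
    (hR : R = (∑ l : Fin n, (((p : ℚ) - 1) * (l : ℕ) + u) / d)
      + ((d : ℚ) - 1) * ∑ l : Fin n,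
          (Int.fract (((p : ℚ) * (l : ℕ) + u) / d) - Int.fract (((l : ℕ) : ℚ) / d))) :
    L ≥ R ∧
      (L = R ↔ ∀ l : Fin n, ((τ l : ℕ) : ℚ) ≤ (d : ℚ) * Int.fract (((p : ℚ) * (l : ℕ) + u) / d)) := by
  set carries : Finset (Fin n) :=
    {l | (d : ℚ) * Int.fract (((p : ℚ) * (l : ℕ) + u) / d) < (τ l : ℕ)}
  have hlt (l : Fin n) : (l : ℕ) < d := by omega
  have hsum : L = R + ((d : ℚ) - 1) * #carries := by
    have hshift : ∑ l : Fin n, (((l : ℕ) : ℚ) - (τ l : ℕ)) = 0 := by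
      rw [sum_sub_distrib, Equiv.sum_comp τ (fun l : Fin n => ((l : ℕ) : ℚ)), sub_self]
    rw [hL, hR, sum_congr rfl fun (l : Fin n) _ =>
      floor_add_mul_fract_mul_add_sub_div p u d l (τ l) (hlt l) (hlt (τ l))]
    simp only [sum_add_distrib, ← mul_sum, hshift, sum_boole, carries]
    ring
  have hd1 : (0 : ℚ) < d - 1 := by
    rw [sub_pos]; exact_mod_cast hd
  refine ⟨by rw [hsum]; exact le_add_of_nonneg_right (by positivity), ?_⟩
  rw [hsum, add_eq_left, mul_eq_zero_iff_left hd1.ne', Nat.cast_eq_zero, card_eq_zero,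
    filter_eq_empty_iff]
  simp only [mem_univ, not_lt, true_imp_iff]

/-- Let p be prime, d ≥ 2 with p ∤ d, 0 ≤ u ≤ p−1, 1 ≤ n ≤ d−1, and τ
a permutation of {0,…,n−1}. Then
∑_l (⌊(pl+u−τ(l))/d⌋ + d·{(pl+u−τ(l))/d}) ≥ ∑_l ((p−1)l+u)/d + (d−1)∑_l({(pl+u)/d} − {l/d}),
with equality if and only if τ(l) ≤ d·{(pl+u)/d} for all l. -/
theorem stmt13 (p d u n : ℕ) (hp : p.Prime) (hd : 2 ≤ d) (hpd : ¬ p ∣ d)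
    (hu : u ≤ p - 1) (hn1 : 1 ≤ n) (hnd : n ≤ d - 1) (τ : Equiv.Perm (Fin n))
    (L R : ℚ)
    (hL : L = ∑ l : Fin n,
      ((⌊((((p * (l : ℕ) + u : ℕ) : ℤ) - ((τ l : ℕ) : ℤ)) : ℚ) / d⌋ : ℚ)
        + (d : ℚ) * Int.fract (((((p * (l : ℕ) + u : ℕ) : ℤ) - ((τ l : ℕ) : ℤ)) : ℚ) / d)))
    (hR : R = (∑ l : Fin n, (((p : ℚ) - 1) * (l : ℕ) + u) / d)
      + ((d : ℚ) - 1) * ∑ l : Fin n,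
          (Int.fract (((p : ℚ) * (l : ℕ) + u) / d) - Int.fract (((l : ℕ) : ℚ) / d))) :
    L ≥ R ∧
      (L = R ↔ ∀ l : Fin n, ((τ l : ℕ) : ℚ) ≤ (d : ℚ) * Int.fract (((p : ℚ) * (l : ℕ) + u) / d)) :=
  stmt13_general p d u n hd hnd τ L R hL hR
end

section
/- For any integer m and permutation value t with 0 ≤ t ≤ d·{m/d} (where m = pl + u), we have {(m − t)/d} = {m/d} − t/d; consequently, for a permutation τ of {0,…,n−1} with τ(l) ≤ d{(pl+u)/d} for all l, ∑_{l=0}^{n−1} d·{(pl+u−τ(l))/d} = ∑_{l=0}^{n−1} ( d·{(pl+u)/d} − l ). -/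
/-! If `0 ≤ t ≤ d {x/d}`, subtracting `t` from `x` does not cross a multiple of `d`, so the integer
part of `x/d` is unchanged and only the fractional part drops by `t/d`. Summing
`d {(pl + u - τ l)/d} = d {(pl + u)/d} - τ l` over `l`, the values `τ l` add up to `∑ l`
because `τ` is a permutation. -/

section LinearOrderedField

variable {K : Type*} [Field K] [LinearOrder K] [IsStrictOrderedRing K] [FloorRing K]

theorem Int.fract_sub_div_of_le_mul_fract {x t d : K} (ht₀ : 0 ≤ t)
    (ht : t ≤ d * Int.fract (x / d)) :
    Int.fract ((x - t) / d) = Int.fract (x / d) - t / d := by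
  rcases ht₀.eq_or_lt with rfl | ht_pos
  · simp
  have hd : 0 < d := pos_of_mul_pos_left (ht_pos.trans_le ht) (Int.fract_nonneg _)
  have htd : t / d ≤ Int.fract (x / d) := by rwa [div_le_iff₀' hd]
  rw [Int.fract_eq_iff]
  refine ⟨sub_nonneg.mpr htd, ?_, ⌊x / d⌋, ?_⟩
  · linarith [Int.fract_lt_one (x / d), div_nonneg ht₀ hd.le]
  · rw [sub_div, ← Int.self_sub_floor (x / d)]
    ring

theorem mul_fract_sub_div_of_le_mul_fract {x t d : K} (ht₀ : 0 ≤ t)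
    (ht : t ≤ d * Int.fract (x / d)) :
    d * Int.fract ((x - t) / d) = d * Int.fract (x / d) - t := by
  rcases eq_or_ne d 0 with rfl | hd
  · simp only [zero_mul] at ht ⊢
    linarith
  rw [Int.fract_sub_div_of_le_mul_fract ht₀ ht, mul_sub, mul_div_cancel₀ _ hd]

end LinearOrderedField

theorem stmt14_general (d : ℕ) :
    (∀ (m : ℤ) (t : ℕ), ((t : ℚ)) ≤ (d : ℚ) * Int.fract ((m : ℚ) / d) →
        Int.fract ((((m - (t : ℤ)) : ℤ) : ℚ) / d) = Int.fract ((m : ℚ) / d) - (t : ℚ) / d)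
      ∧ ∀ (p u n : ℕ) (τ : Equiv.Perm (Fin n)),
          (∀ l : Fin n, ((τ l : ℕ) : ℚ) ≤ (d : ℚ) * Int.fract (((p : ℚ) * (l : ℕ) + u) / d)) →
          ∑ l : Fin n, (d : ℚ) *
              Int.fract (((((p * (l : ℕ) + u : ℕ) : ℤ) - ((τ l : ℕ) : ℤ) : ℤ) : ℚ) / d)
            = ∑ l : Fin n,
                ((d : ℚ) * Int.fract (((p : ℚ) * (l : ℕ) + u) / d) - ((l : ℕ) : ℚ)) := by
  refine ⟨fun m t ht => ?_, fun p u n τ hτ => ?_⟩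
  · push_cast
    exact Int.fract_sub_div_of_le_mul_fract t.cast_nonneg ht
  calc ∑ l : Fin n, (d : ℚ) *
          Int.fract (((((p * (l : ℕ) + u : ℕ) : ℤ) - ((τ l : ℕ) : ℤ) : ℤ) : ℚ) / d)
      = ∑ l : Fin n, ((d : ℚ) * Int.fract (((p : ℚ) * (l : ℕ) + u) / d) - ((τ l : ℕ) : ℚ)) :=
        Finset.sum_congr rfl fun l _ => by
          push_cast
          exact mul_fract_sub_div_of_le_mul_fract (Nat.cast_nonneg _) (hτ l)
    _ = _ := by
        rw [Finset.sum_sub_distrib, Finset.sum_sub_distrib,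
          Equiv.sum_comp τ fun l : Fin n => ((l : ℕ) : ℚ)]

/-- For any integer m and 0 ≤ t ≤ d·{m/d}, one has
{(m − t)/d} = {m/d} − t/d. Consequently, for a permutation τ of {0,…,n−1} with
τ(l) ≤ d·{(pl+u)/d} for all l, ∑_l d·{(pl+u−τ(l))/d} = ∑_l (d·{(pl+u)/d} − l). -/
theorem stmt14 (d : ℕ) (hd : 2 ≤ d) :
    (∀ (m : ℤ) (t : ℕ), ((t : ℚ)) ≤ (d : ℚ) * Int.fract ((m : ℚ) / d) →
        Int.fract ((((m - (t : ℤ)) : ℤ) : ℚ) / d) = Int.fract ((m : ℚ) / d) - (t : ℚ) / d)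
      ∧ ∀ (p u n : ℕ) (τ : Equiv.Perm (Fin n)),
          (∀ l : Fin n, ((τ l : ℕ) : ℚ) ≤ (d : ℚ) * Int.fract (((p : ℚ) * (l : ℕ) + u) / d)) →
          ∑ l : Fin n, (d : ℚ) *
              Int.fract (((((p * (l : ℕ) + u : ℕ) : ℤ) - ((τ l : ℕ) : ℤ) : ℤ) : ℚ) / d)
            = ∑ l : Fin n,
                ((d : ℚ) * Int.fract (((p : ℚ) * (l : ℕ) + u) / d) - ((l : ℕ) : ℚ)) :=
  stmt14_general d
end
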